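/- arXiv:2605.12041 — 3 statements merged into one kernel-verified Lean document; each statement's English description precedes it below -/
import Mathlib

section
/- Let A be an m×n real matrix, B an l×n real matrix, b ∈ ℝ^m, and α > 0. Then the function φ(x) = ½‖Ax − b‖² + α‖Bx‖₁ attains its minimum over ℝⁿ, i.e., the set argmin φ is nonempty. -/
open Matrix

set_option maxHeartbeats 1000000 in
theorem stmt0 (m n l : ℕ) (A : Matrix (Fin m) (Fin n) ℝ) (B : Matrix (Fin l) (Fin n) ℝ)
    (b : Fin m → ℝ) (α : ℝ) (hα : 0 < α) :
    ∃ x : Fin n → ℝ, ∀ y : Fin n → ℝ,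
      (1/2) * ∑ i, (A.mulVec x i - b i) ^ 2 + α * ∑ j, |B.mulVec x j| ≤
      (1/2) * ∑ i, (A.mulVec y i - b i) ^ 2 + α * ∑ j, |B.mulVec y j| := by
  set φ : (Fin n → ℝ) → ℝ := fun x =>
    (1/2) * ∑ i, (A.mulVec x i - b i) ^ 2 + α * ∑ j, |B.mulVec x j| with hφ
  -- continuity facts
  have hAc : ∀ i, Continuous fun x : Fin n → ℝ => A.mulVec x i := by
    intro i
    simp only [Matrix.mulVec, dotProduct]
    exact continuous_finset_sum _ fun j _ => continuous_const.mul (continuous_apply j)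
  have hBc : ∀ j, Continuous fun x : Fin n → ℝ => B.mulVec x j := by
    intro j
    simp only [Matrix.mulVec, dotProduct]
    exact continuous_finset_sum _ fun k _ => continuous_const.mul (continuous_apply k)
  have hφc : Continuous φ := by
    apply Continuous.add
    · exact continuous_const.mul (continuous_finset_sum _ fun i _ =>
        ((hAc i).sub continuous_const).pow 2)
    · exact continuous_const.mul (continuous_finset_sum _ fun j _ => (hBc j).abs)
  have hφval : ∀ w : Fin n → ℝ,
      φ w = (1/2) * ∑ i, (A.mulVec w i - b i) ^ 2 + α * ∑ j, |B.mulVec w j| := fun _ => rfl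
  have hφnn : ∀ w, (0:ℝ) ≤ φ w := by
    intro w
    rw [hφval]
    have h1 : (0:ℝ) ≤ (1/2) * ∑ i, (A.mulVec w i - b i) ^ 2 :=
      mul_nonneg (by norm_num) (Finset.sum_nonneg fun i _ => sq_nonneg _)
    have h2 : (0:ℝ) ≤ α * ∑ j, |B.mulVec w j| :=
      mul_nonneg hα.le (Finset.sum_nonneg fun j _ => abs_nonneg _)
    linarith
  -- the kernel and a complement
  set K : Submodule ℝ (Fin n → ℝ) := LinearMap.ker A.mulVecLin ⊓ LinearMap.ker B.mulVecLin
    with hK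
  obtain ⟨W, hW⟩ := K.exists_isCompl
  have hWclosed : IsClosed (W : Set (Fin n → ℝ)) := W.closed_of_finiteDimensional
  -- φ only depends on the W-component
  have hinv : ∀ k ∈ K, ∀ w : Fin n → ℝ, φ (k + w) = φ w := by
    intro k hk w
    obtain ⟨hkA, hkB⟩ := Submodule.mem_inf.mp hk
    have hA0 : A.mulVec k = 0 := hkA
    have hB0 : B.mulVec k = 0 := hkB
    have h1 : A.mulVec (k + w) = A.mulVec w := by
      rw [Matrix.mulVec_add, hA0, zero_add]
    have h2 : B.mulVec (k + w) = B.mulVec w := by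
      rw [Matrix.mulVec_add, hB0, zero_add]
    simp only [hφ, h1, h2]
  -- the comparison function N and its lower bound on W
  set N : (Fin n → ℝ) → ℝ := fun x => ∑ i, |A.mulVec x i| + ∑ j, |B.mulVec x j| with hN
  have hNval : ∀ x : Fin n → ℝ,
      N x = ∑ i, |A.mulVec x i| + ∑ j, |B.mulVec x j| := fun _ => rfl
  have hNc : Continuous N := by
    apply Continuous.add
    · exact continuous_finset_sum _ fun i _ => (hAc i).abs
    · exact continuous_finset_sum _ fun j _ => (hBc j).abs
  have hNnonneg : ∀ x, 0 ≤ N x := fun x =>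
    add_nonneg (Finset.sum_nonneg fun i _ => abs_nonneg _)
      (Finset.sum_nonneg fun j _ => abs_nonneg _)
  have hNhom : ∀ (t : ℝ) (x : Fin n → ℝ), N (t • x) = |t| * N x := by
    intro t x
    have h1 : A.mulVec (t • x) = t • A.mulVec x := by
      rw [Matrix.mulVec_smul]
    have h2 : B.mulVec (t • x) = t • B.mulVec x := by
      rw [Matrix.mulVec_smul]
    simp only [hN, h1, h2, Pi.smul_apply, smul_eq_mul, abs_mul, ← Finset.mul_sum, mul_add]
  have hNpos : ∀ x, x ∈ W → x ≠ 0 → 0 < N x := by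
    intro x hxW hx0
    rcases lt_or_eq_of_le (hNnonneg x) with h | h
    · exact h
    exfalso
    rw [hNval] at h
    have hs1 : (0:ℝ) ≤ ∑ i, |A.mulVec x i| := Finset.sum_nonneg fun i _ => abs_nonneg _
    have hs2 : (0:ℝ) ≤ ∑ j, |B.mulVec x j| := Finset.sum_nonneg fun j _ => abs_nonneg _
    have hA1 : ∑ i, |A.mulVec x i| = 0 := by linarith
    have hB1 : ∑ j, |B.mulVec x j| = 0 := by linarith
    have hA0 : ∀ i, |A.mulVec x i| = 0 := fun i =>
      (Finset.sum_eq_zero_iff_of_nonneg (fun i _ => abs_nonneg (A.mulVec x i))).mp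
        hA1 i (Finset.mem_univ i)
    have hB0 : ∀ j, |B.mulVec x j| = 0 := fun j =>
      (Finset.sum_eq_zero_iff_of_nonneg (fun j _ => abs_nonneg (B.mulVec x j))).mp
        hB1 j (Finset.mem_univ j)
    have hxK : x ∈ K := by
      rw [hK, Submodule.mem_inf]
      constructor
      · show A.mulVecLin x = 0
        ext i; simpa using abs_eq_zero.mp (hA0 i)
      · show B.mulVecLin x = 0
        ext j; simpa using abs_eq_zero.mp (hB0 j)
    exact hx0 (Submodule.disjoint_def.mp hW.disjoint x hxK hxW)
  -- lower bound: ∃ c > 0, ∀ w ∈ W, c * ‖w‖ ≤ N w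
  have hc : ∃ c : ℝ, 0 < c ∧ ∀ w ∈ W, c * ‖w‖ ≤ N w := by
    set S : Set (Fin n → ℝ) := (W : Set (Fin n → ℝ)) ∩ Metric.sphere 0 1 with hS
    have hScomp : IsCompact S := (isCompact_sphere 0 1).inter_left hWclosed
    rcases S.eq_empty_or_nonempty with hSe | hSne
    · refine ⟨1, one_pos, fun w hw => ?_⟩
      have hw0 : w = 0 := by
        by_contra h0
        have : ‖w‖⁻¹ • w ∈ S := by
          constructor
          · exact W.smul_mem _ hw
          · simp [norm_smul, inv_mul_cancel₀ (norm_ne_zero_iff.mpr h0)]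
        rw [hSe] at this; exact this
      simp [hw0, hNnonneg]
    · obtain ⟨w₀, hw₀S, hw₀min⟩ := hScomp.exists_isMinOn hSne hNc.continuousOn
      obtain ⟨hw₀W, hw₀s⟩ := hw₀S
      have hw₀norm : ‖w₀‖ = 1 := by simpa using hw₀s
      have hw₀0 : w₀ ≠ 0 := by
        intro h; rw [h] at hw₀norm; simp at hw₀norm
      refine ⟨N w₀, hNpos w₀ hw₀W hw₀0, fun w hw => ?_⟩
      rcases eq_or_ne w 0 with rfl | hwne
      · simp [hNnonneg]
      · have hnw : (0:ℝ) < ‖w‖ := norm_pos_iff.mpr hwne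
        have hmem : ‖w‖⁻¹ • w ∈ S := by
          constructor
          · exact W.smul_mem _ hw
          · simp [norm_smul, inv_mul_cancel₀ hnw.ne']
        have hle : N w₀ ≤ N (‖w‖⁻¹ • w) := hw₀min hmem
        rw [hNhom, abs_of_pos (inv_pos.mpr hnw)] at hle
        calc N w₀ * ‖w‖ ≤ (‖w‖⁻¹ * N w) * ‖w‖ := mul_le_mul_of_nonneg_right hle hnw.le
          _ = N w := by field_simp
  obtain ⟨c, hcpos, hcbound⟩ := hc
  -- key constants (opaque)
  obtain ⟨M0, hM0⟩ : ∃ M0 : ℝ, M0 = φ 0 := ⟨_, rfl⟩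
  have hM0nonneg : 0 ≤ M0 := hM0 ▸ hφnn 0
  obtain ⟨β, hβ⟩ : ∃ β : ℝ, β = ∑ i, |b i| := ⟨_, rfl⟩
  have hβnonneg : 0 ≤ β := hβ ▸ Finset.sum_nonneg fun i _ => abs_nonneg _
  obtain ⟨γ, hγ⟩ : ∃ γ : ℝ, γ = Real.sqrt (2 * m * M0) := ⟨_, rfl⟩
  have hγnn : 0 ≤ γ := hγ ▸ Real.sqrt_nonneg _
  have hγsq : γ ^ 2 = 2 * m * M0 := by
    rw [hγ, Real.sq_sqrt]; positivity
  obtain ⟨S₀, hS₀⟩ : ∃ S₀ : ℝ, S₀ = 2 * (M0 / α) + 2 * β + 2 * γ + 2 := ⟨_, rfl⟩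
  have hMα : 0 ≤ M0 / α := div_nonneg hM0nonneg hα.le
  have hS₀pos : 0 < S₀ := by rw [hS₀]; linarith
  -- coercivity on W
  have hcoer : ∀ w ∈ W, S₀ < N w → M0 < φ w := by
    intro w hwW hNw
    have hterm1 : (0:ℝ) ≤ (1/2) * ∑ i, (A.mulVec w i - b i) ^ 2 :=
      mul_nonneg (by norm_num) (Finset.sum_nonneg fun i _ => sq_nonneg _)
    have hterm2 : (0:ℝ) ≤ α * ∑ j, |B.mulVec w j| :=
      mul_nonneg hα.le (Finset.sum_nonneg fun j _ => abs_nonneg _)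
    rw [hNval] at hNw
    rw [hφval]
    rcases le_or_gt (S₀ / 2) (∑ j, |B.mulVec w j|) with hB | hB
    · -- B-term big
      have h1 : α * (S₀ / 2) ≤ α * ∑ j, |B.mulVec w j| :=
        mul_le_mul_of_nonneg_left hB hα.le
      have h2 : M0 < α * (S₀ / 2) := by
        have hMα' : α * (M0 / α) = M0 := by field_simp
        have e : α * (S₀ / 2) = α * (M0 / α) + α * β + α * γ + α := by
          rw [hS₀]; ring
        rw [e, hMα']
        nlinarith [mul_nonneg hα.le hβnonneg, mul_nonneg hα.le hγnn]
      linarith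
    · -- A-term big
      have hA : S₀ / 2 < ∑ i, |A.mulVec w i| := by linarith
      have hAb : S₀ / 2 - β < ∑ i, |A.mulVec w i - b i| := by
        have h1 : ∑ i, |A.mulVec w i| ≤ ∑ i, (|A.mulVec w i - b i| + |b i|) := by
          apply Finset.sum_le_sum
          intro i _
          calc |A.mulVec w i| = |(A.mulVec w i - b i) + b i| := by ring_nf
            _ ≤ |A.mulVec w i - b i| + |b i| := abs_add_le _ _
        rw [Finset.sum_add_distrib] at h1
        rw [hβ]
        linarith [hβ ▸ h1]
      have hmpos : 0 < m := by
        rcases Nat.eq_zero_or_pos m with hm | hm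
        · exfalso
          subst hm
          simp at hA
          linarith
        · exact hm
      have hmpos' : (0:ℝ) < m := by exact_mod_cast hmpos
      have hCS : (∑ i, |A.mulVec w i - b i|) ^ 2 ≤ m * ∑ i, (A.mulVec w i - b i) ^ 2 := by
        have := sq_sum_le_card_mul_sum_sq (s := (Finset.univ : Finset (Fin m)))
          (f := fun i : Fin m => |A.mulVec w i - b i|)
        simpa [sq_abs, Finset.card_univ] using this
      have hgap : 2 * m * M0 < (S₀ / 2 - β) ^ 2 := by
        have hpos : γ < S₀ / 2 - β := by rw [hS₀]; linarith
        have := pow_lt_pow_left₀ hpos hγnn (n := 2) (by norm_num)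
        rw [hγsq] at this
        exact this
      have hnn2 : 0 ≤ S₀ / 2 - β := by rw [hS₀]; linarith
      have h1 : (S₀ / 2 - β) ^ 2 < (∑ i, |A.mulVec w i - b i|) ^ 2 :=
        pow_lt_pow_left₀ hAb hnn2 (by norm_num)
      have h2' : 2 * m * M0 < m * ∑ i, (A.mulVec w i - b i) ^ 2 :=
        lt_of_lt_of_le (lt_trans hgap h1) hCS
      have h2 : (m:ℝ) * (2 * M0) < m * ∑ i, (A.mulVec w i - b i) ^ 2 := by
        have e2 : (m:ℝ) * (2 * M0) = 2 * m * M0 := by ring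
        rw [e2]; exact h2'
      have hsum : 2 * M0 < ∑ i, (A.mulVec w i - b i) ^ 2 :=
        lt_of_mul_lt_mul_left h2 hmpos'.le
      linarith
  -- minimize over the compact set
  obtain ⟨R, hRdef⟩ : ∃ R : ℝ, R = S₀ / c := ⟨_, rfl⟩
  have hRpos : 0 < R := hRdef ▸ div_pos hS₀pos hcpos
  set C : Set (Fin n → ℝ) := (W : Set (Fin n → ℝ)) ∩ Metric.closedBall 0 R with hC
  have hCcomp : IsCompact C := (isCompact_closedBall 0 R).inter_left hWclosed
  have h0C : (0 : Fin n → ℝ) ∈ C :=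
    ⟨W.zero_mem, by simpa [Metric.mem_closedBall] using hRpos.le⟩
  obtain ⟨x₀, hx₀C, hx₀min⟩ := hCcomp.exists_isMinOn ⟨0, h0C⟩ hφc.continuousOn
  refine ⟨x₀, fun y => ?_⟩
  obtain ⟨k, w, hk, hw, hkw⟩ := Submodule.codisjoint_iff_exists_add_eq.mp hW.codisjoint y
  have hy : φ y = φ w := by rw [← hkw]; exact hinv k hk w
  show φ x₀ ≤ φ y
  rw [hy]
  rcases le_or_gt ‖w‖ R with hwR | hwR
  · exact hx₀min ⟨hw, by simpa [Metric.mem_closedBall, dist_zero_right] using hwR⟩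
  · have hcw : c * ‖w‖ ≤ N w := hcbound w hw
    have h2 : S₀ < c * ‖w‖ := by
      have e : S₀ = c * (S₀ / c) := by field_simp
      rw [e, ← hRdef]
      exact mul_lt_mul_of_pos_left hwR hcpos
    have h1 : M0 < φ w := hcoer w hw (by linarith)
    have h3 : φ x₀ ≤ M0 := hM0 ▸ hx₀min h0C
    linarith
end

section
/- Let A be an m×n matrix, B an l×n matrix, b ∈ ℝ^m, α > 0, and φ(x) = ½‖Ax−b‖² + α‖Bx‖₁. If ker A ∩ ker B = {0}, then φ is coercive: φ(x_k) → ∞ whenever ‖x_k‖ → ∞. -/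
open Matrix Filter

lemma sqrtsum_eq {ι : Type*} [Fintype ι] (v : ι → ℝ) :
    Real.sqrt (∑ i, v i ^ 2) = ‖(WithLp.equiv 2 (ι → ℝ)).symm v‖ := by
  rw [EuclideanSpace.norm_eq]
  simp [Real.norm_eq_abs, sq_abs]

lemma key (m n l : ℕ) (A : Matrix (Fin m) (Fin n) ℝ) (B : Matrix (Fin l) (Fin n) ℝ)
    (hker : ∀ u : Fin n → ℝ, A.mulVec u = 0 → B.mulVec u = 0 → u = 0) :
    ∃ c > 0, ∀ u : Fin n → ℝ,
      c * Real.sqrt (∑ i, u i ^ 2) ≤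
        Real.sqrt (∑ i, (A.mulVec u i) ^ 2) + ∑ j, |B.mulVec u j| := by
  set g : (Fin n → ℝ) → ℝ :=
    fun u => Real.sqrt (∑ i, (A.mulVec u i) ^ 2) + ∑ j, |B.mulVec u j| with hg
  have hA : Continuous fun u : Fin n → ℝ => A.mulVec u :=
    A.mulVecLin.continuous_of_finiteDimensional
  have hB : Continuous fun u : Fin n → ℝ => B.mulVec u :=
    B.mulVecLin.continuous_of_finiteDimensional
  have hgc : Continuous g := by fun_prop
  have hgnn : ∀ u, 0 ≤ g u := fun u =>
    add_nonneg (Real.sqrt_nonneg _) (Finset.sum_nonneg fun j _ => abs_nonneg _)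
  have hgpos : ∀ u : Fin n → ℝ, u ≠ 0 → 0 < g u := by
    intro u hu
    rcases (hgnn u).lt_or_eq with h | h
    · exact h
    exfalso
    have h' : Real.sqrt (∑ i, (A.mulVec u i) ^ 2) + ∑ j, |B.mulVec u j| = 0 := h.symm
    have hs1 : 0 ≤ Real.sqrt (∑ i, (A.mulVec u i) ^ 2) := Real.sqrt_nonneg _
    have hs2 : 0 ≤ ∑ j, |B.mulVec u j| :=
      Finset.sum_nonneg fun j _ => abs_nonneg _
    have h1 : Real.sqrt (∑ i, (A.mulVec u i) ^ 2) = 0 ∧ (∑ j, |B.mulVec u j|) = 0 :=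
      ⟨by linarith, by linarith⟩
    have hAu : A.mulVec u = 0 := by
      have h0 := sqrtsum_eq (A.mulVec u)
      rw [h1.1] at h0
      have h2 : (WithLp.equiv 2 (Fin m → ℝ)).symm (A.mulVec u) = 0 := norm_eq_zero.mp h0.symm
      simpa using congrArg (WithLp.equiv 2 (Fin m → ℝ)) h2
    have hBu : B.mulVec u = 0 := by
      ext j
      have := (Finset.sum_eq_zero_iff_of_nonneg
        (fun j (_ : j ∈ Finset.univ) => abs_nonneg (B.mulVec u j))).mp h1.2 j (Finset.mem_univ j)
      simpa using abs_eq_zero.mp this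
    exact hu (hker u hAu hBu)
  -- homogeneity
  have hghom : ∀ (t : ℝ), 0 ≤ t → ∀ u, g (t • u) = t * g u := by
    intro t ht u
    have hAs : A.mulVec (t • u) = t • A.mulVec u := by
      rw [Matrix.mulVec_smul]
    have hBs : B.mulVec (t • u) = t • B.mulVec u := by
      rw [Matrix.mulVec_smul]
    simp only [hg, hAs, hBs, Pi.smul_apply, smul_eq_mul]
    rw [mul_add]
    congr 1
    · rw [show ∑ i, (t * A.mulVec u i) ^ 2 = t ^ 2 * ∑ i, (A.mulVec u i) ^ 2 by
        rw [Finset.mul_sum]; congr 1; ext i; ring]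
      rw [Real.sqrt_mul (sq_nonneg t), Real.sqrt_sq ht]
    · rw [Finset.mul_sum]
      congr 1; ext j
      rw [abs_mul, abs_of_nonneg ht]
  rcases Nat.eq_zero_or_pos n with hn | hn
  · refine ⟨1, one_pos, fun u => ?_⟩
    subst hn
    simp
  haveI : Nonempty (Fin n) := ⟨⟨0, hn⟩⟩
  have hsne : (Metric.sphere (0 : EuclideanSpace ℝ (Fin n)) 1).Nonempty :=
    NormedSpace.sphere_nonempty.mpr zero_le_one
  have hcomp : IsCompact (Metric.sphere (0 : EuclideanSpace ℝ (Fin n)) 1) :=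
    isCompact_sphere 0 1
  have hfc : Continuous fun u : EuclideanSpace ℝ (Fin n) => g (WithLp.equiv 2 (Fin n → ℝ) u) :=
    hgc.comp (PiLp.continuous_ofLp 2 (fun _ : Fin n => ℝ))
  obtain ⟨u₀, hu₀s, hu₀min⟩ := hcomp.exists_isMinOn hsne hfc.continuousOn
  set c := g (WithLp.equiv 2 (Fin n → ℝ) u₀) with hc
  have hu₀ne : (WithLp.equiv 2 (Fin n → ℝ) u₀) ≠ 0 := by
    intro h
    have : u₀ = 0 := by
      apply (WithLp.equiv 2 (Fin n → ℝ)).injective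
      simpa using h
    rw [this] at hu₀s
    simp at hu₀s
  have hcpos : 0 < c := hgpos _ hu₀ne
  refine ⟨c, hcpos, fun u => ?_⟩
  rcases eq_or_ne u 0 with rfl | hu
  · simp
  set r := Real.sqrt (∑ i, u i ^ 2) with hr
  have hrpos : 0 < r := by
    rw [hr, sqrtsum_eq]
    rw [norm_pos_iff]
    intro h
    exact hu (by simpa using congrArg (WithLp.equiv 2 (Fin n → ℝ)) h)
  set u' : EuclideanSpace ℝ (Fin n) := (WithLp.equiv 2 (Fin n → ℝ)).symm (r⁻¹ • u) with hu'
  have hu's : u' ∈ Metric.sphere (0 : EuclideanSpace ℝ (Fin n)) 1 := by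
    simp only [Metric.mem_sphere, dist_zero_right, hu']
    have : (WithLp.equiv 2 (Fin n → ℝ)).symm (r⁻¹ • u)
        = r⁻¹ • (WithLp.equiv 2 (Fin n → ℝ)).symm u := by
      simp
    rw [this, norm_smul, ← sqrtsum_eq, ← hr]
    rw [Real.norm_eq_abs, abs_of_nonneg (inv_nonneg.mpr hrpos.le)]
    field_simp
  have hmin' : c ≤ g (r⁻¹ • u) := by
    have := hu₀min hu's
    simpa [hu', hc] using this
  have hhom := hghom r⁻¹ (inv_nonneg.mpr hrpos.le) u
  rw [hhom] at hmin'
  show c * r ≤ g u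
  calc c * r ≤ (r⁻¹ * g u) * r := mul_le_mul_of_nonneg_right hmin' hrpos.le
    _ = g u := by field_simp

lemma sqrtsum_sub {ι : Type*} [Fintype ι] (v w : ι → ℝ) :
    Real.sqrt (∑ i, (v i - w i) ^ 2)
      = ‖(WithLp.equiv 2 (ι → ℝ)).symm v - (WithLp.equiv 2 (ι → ℝ)).symm w‖ := by
  have : (WithLp.equiv 2 (ι → ℝ)).symm v - (WithLp.equiv 2 (ι → ℝ)).symm w
      = (WithLp.equiv 2 (ι → ℝ)).symm (fun i => v i - w i) := by
    ext i; simp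
  rw [this, ← sqrtsum_eq (fun i => v i - w i)]

theorem stmt2 (m n l : ℕ) (A : Matrix (Fin m) (Fin n) ℝ) (B : Matrix (Fin l) (Fin n) ℝ)
    (b : Fin m → ℝ) (α : ℝ) (hα : 0 < α)
    (hker : ∀ u : Fin n → ℝ, A.mulVec u = 0 → B.mulVec u = 0 → u = 0) :
    ∀ x : ℕ → Fin n → ℝ,
      Tendsto (fun k => Real.sqrt (∑ i, (x k i) ^ 2)) atTop atTop →
      Tendsto (fun k =>
        (1/2) * ∑ i, (A.mulVec (x k) i - b i) ^ 2 + α * ∑ j, |B.mulVec (x k) j|)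
        atTop atTop := by
  intro x hx
  obtain ⟨c, hc, hkey⟩ := key m n l A B hker
  rw [tendsto_atTop]
  intro C
  set β := Real.sqrt (∑ i, b i ^ 2) with hβ
  have hβnn : 0 ≤ β := Real.sqrt_nonneg _
  set R : ℝ := max ((2 * (β + Real.sqrt (2 * |C|))) / c) ((2 * |C|) / (α * c)) with hR
  filter_upwards [hx.eventually_ge_atTop R] with k hk
  set v := x k with hv
  set t := Real.sqrt (∑ i, (A.mulVec v i) ^ 2) with ht
  set s := ∑ j, |B.mulVec v j| with hs
  set r := Real.sqrt (∑ i, v i ^ 2) with hr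
  have htnn : 0 ≤ t := Real.sqrt_nonneg _
  have hsnn : 0 ≤ s := Finset.sum_nonneg fun j _ => abs_nonneg _
  have hqnn : 0 ≤ ∑ i, (A.mulVec v i - b i) ^ 2 := Finset.sum_nonneg fun i _ => sq_nonneg _
  have hCabs : C ≤ |C| := le_abs_self C
  have hsqnn : 0 ≤ Real.sqrt (2 * |C|) := Real.sqrt_nonneg _
  have hts : c * r ≤ t + s := hkey v
  have hcR : c * R ≤ t + s :=
    le_trans (mul_le_mul_of_nonneg_left hk hc.le) hts
  have hR1 : (2 * (β + Real.sqrt (2 * |C|))) / c ≤ R := le_max_left _ _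
  have hR2 : (2 * |C|) / (α * c) ≤ R := le_max_right _ _
  rcases le_or_gt (c * R / 2) t with hcase | hcase
  · -- t is large
    have h1 : β + Real.sqrt (2 * |C|) ≤ c * R / 2 := by
      rw [div_le_iff₀ hc] at hR1
      linarith
    have h2 : Real.sqrt (2 * |C|) ≤ t - β := by linarith
    -- ‖Av - b‖ ≥ t - β
    have h3 : t - β ≤ Real.sqrt (∑ i, (A.mulVec v i - b i) ^ 2) := by
      rw [sqrtsum_sub, ht, hβ, sqrtsum_eq, sqrtsum_eq]
      exact norm_sub_norm_le _ _
    have h4 : (t - β) ^ 2 ≤ ∑ i, (A.mulVec v i - b i) ^ 2 := by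
      have := pow_le_pow_left₀ (by linarith) h3 2
      rwa [Real.sq_sqrt hqnn] at this
    have h5 : 2 * |C| ≤ (t - β) ^ 2 := by
      have := pow_le_pow_left₀ hsqnn h2 2
      rwa [Real.sq_sqrt (by positivity)] at this
    have h6 : 0 ≤ α * s := mul_nonneg hα.le hsnn
    nlinarith
  · -- s is large
    have hslarge : c * R / 2 ≤ s := by linarith
    have h1 : 2 * |C| ≤ α * (c * R) := by
      rw [div_le_iff₀ (by positivity)] at hR2
      nlinarith
    have h2 : |C| ≤ α * s := by nlinarith
    nlinarith
end

section
/- Assume the function ψ(x,z) = ½‖Ax−b‖² + α‖z‖₁ + ⟨ζ*, Bx−z⟩ + (σ/2)‖Bx−z‖² has a unique minimizer (x̄, z̄), and let W̄ be the l×l diagonal matrix with W̄_ii = 0 if z̄_i ≠ 0 and W̄_ii = 1 if z̄_i = 0. Suppose further that the subgradient z̄* := ζ* + σ(Bx̄ − z̄) satisfies |z̄*_i| < α for all i with z̄_i = 0. Then the matrix AᵀA + σ BᵀW̄B is positive definite. -/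
open Matrix

/-- Augmented Lagrangian with fixed multiplier. -/
noncomputable def psiAL17 (m n l : ℕ) (A : Matrix (Fin m) (Fin n) ℝ)
    (B : Matrix (Fin l) (Fin n) ℝ) (b : Fin m → ℝ) (α σ : ℝ) (ζs : Fin l → ℝ)
    (x : Fin n → ℝ) (z : Fin l → ℝ) : ℝ :=
  (1/2) * ∑ i, (A.mulVec x i - b i) ^ 2 + α * ∑ j, |z j|
    + ∑ j, ζs j * (B.mulVec x j - z j) + (σ/2) * ∑ j, (B.mulVec x j - z j) ^ 2

lemma abs_pair17 (a c : ℝ) (h : |c| < |a|) : |a + c| + |a - c| = 2 * |a| := by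
  rcases lt_trichotomy a 0 with ha | ha | ha
  · rw [abs_of_neg ha] at h
    rw [abs_of_neg ha, abs_of_neg (by cases abs_lt.1 h; linarith), abs_of_neg (by cases abs_lt.1 h; linarith)]
    ring
  · simp [ha] at h; linarith [abs_nonneg c]
  · rw [abs_of_pos ha] at h
    rw [abs_of_pos ha, abs_of_pos (by cases abs_lt.1 h; linarith), abs_of_pos (by cases abs_lt.1 h; linarith)]
    ring

lemma null17 (m n l : ℕ) (A : Matrix (Fin m) (Fin n) ℝ) (B : Matrix (Fin l) (Fin n) ℝ)
    (b : Fin m → ℝ) (α σ : ℝ) (hα : 0 < α) (ζs : Fin l → ℝ)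
    (xbar : Fin n → ℝ) (zbar : Fin l → ℝ)
    (hmin : ∀ (x : Fin n → ℝ) (z : Fin l → ℝ),
      psiAL17 m n l A B b α σ ζs xbar zbar ≤ psiAL17 m n l A B b α σ ζs x z)
    (huniq : ∀ (x : Fin n → ℝ) (z : Fin l → ℝ),
      (∀ (x' : Fin n → ℝ) (z' : Fin l → ℝ),
        psiAL17 m n l A B b α σ ζs x z ≤ psiAL17 m n l A B b α σ ζs x' z') →
      x = xbar ∧ z = zbar)
    (v : Fin n → ℝ) (hAv : A *ᵥ v = 0)
    (hBv : ∀ i, zbar i = 0 → (B *ᵥ v) i = 0) : v = 0 := by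
  classical
  set u : Fin l → ℝ := B *ᵥ v with hu
  -- choose t
  set S : Finset ℝ := insert (1:ℝ)
    ((Finset.univ.filter (fun i => zbar i ≠ 0)).image (fun i => |zbar i| / (|u i| + 1))) with hS
  have hSne : S.Nonempty := ⟨1, Finset.mem_insert_self _ _⟩
  set t : ℝ := S.min' hSne with htdef
  have hpos : ∀ r ∈ S, 0 < r := by
    intro r hr
    rcases Finset.mem_insert.1 hr with h | h
    · rw [h]; norm_num
    · obtain ⟨i, hi, hie⟩ := Finset.mem_image.1 h
      have hzi : zbar i ≠ 0 := (Finset.mem_filter.1 hi).2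
      rw [← hie]; exact div_pos (abs_pos.2 hzi) (by positivity)
  have ht0 : 0 < t := hpos _ (S.min'_mem hSne)
  have ht : ∀ i, zbar i ≠ 0 → t * |u i| < |zbar i| := by
    intro i hi
    have hmem : |zbar i| / (|u i| + 1) ∈ S := by
      rw [hS]
      exact Finset.mem_insert_of_mem (Finset.mem_image.2 ⟨i, Finset.mem_filter.2 ⟨Finset.mem_univ _, hi⟩, rfl⟩)
    have hle : t ≤ |zbar i| / (|u i| + 1) := S.min'_le _ hmem
    have h1 : t * (|u i| + 1) ≤ |zbar i| := by
      rw [← le_div_iff₀ (by positivity)]; exact hle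
    nlinarith [abs_nonneg (u i)]
  -- per-index identity
  have habs : ∀ i, |zbar i + t * u i| + |zbar i - t * u i| = 2 * |zbar i| := by
    intro i
    by_cases hz : zbar i = 0
    · simp [hz, hBv i hz]
    · exact abs_pair17 _ _ (by rw [abs_mul, abs_of_pos ht0]; exact ht i hz)
  -- psi along the line
  have hpsi : ∀ s : ℝ, psiAL17 m n l A B b α σ ζs (xbar + s • v) (zbar + s • u) =
      psiAL17 m n l A B b α σ ζs xbar zbar
        + α * ((∑ j, |zbar j + s * u j|) - ∑ j, |zbar j|) := by
    intro s
    have hA' : A *ᵥ (xbar + s • v) = A *ᵥ xbar := by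
      rw [Matrix.mulVec_add, Matrix.mulVec_smul, hAv]; simp
    have hB' : ∀ j, B.mulVec (xbar + s • v) j - (zbar + s • u) j = B.mulVec xbar j - zbar j := by
      intro j
      rw [Matrix.mulVec_add, Matrix.mulVec_smul]
      simp [hu]
    simp only [psiAL17, hA', hB']
    simp only [Pi.add_apply, Pi.smul_apply, smul_eq_mul]
    ring
  -- minimality
  have hL : ∀ s : ℝ, (∑ j, |zbar j|) ≤ ∑ j, |zbar j + s * u j| := by
    intro s
    have h1 := hmin (xbar + s • v) (zbar + s • u)
    rw [hpsi s] at h1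
    nlinarith
  have hsum : (∑ j, |zbar j + t * u j|) + (∑ j, |zbar j + (-t) * u j|) = 2 * ∑ j, |zbar j| := by
    rw [← Finset.sum_add_distrib, Finset.mul_sum]
    apply Finset.sum_congr rfl
    intro j _
    have := habs j
    rw [neg_mul]
    rw [show zbar j + -(t * u j) = zbar j - t * u j by ring]
    exact this
  have heq : (∑ j, |zbar j + t * u j|) = ∑ j, |zbar j| := by
    have h1 := hL t
    have h2 := hL (-t)
    linarith
  have hval : psiAL17 m n l A B b α σ ζs (xbar + t • v) (zbar + t • u) =
      psiAL17 m n l A B b α σ ζs xbar zbar := by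
    rw [hpsi t, heq]; ring
  have hglob : ∀ (x' : Fin n → ℝ) (z' : Fin l → ℝ),
      psiAL17 m n l A B b α σ ζs (xbar + t • v) (zbar + t • u) ≤ psiAL17 m n l A B b α σ ζs x' z' := by
    intro x' z'; rw [hval]; exact hmin x' z'
  have hx := (huniq _ _ hglob).1
  have : t • v = 0 := by
    have := congrArg (fun w => w - xbar) hx
    simpa using this
  have := smul_eq_zero.1 this
  rcases this with h | h
  · exact absurd h (ne_of_gt ht0)
  · exact h

theorem stmt17 (m n l : ℕ) (A : Matrix (Fin m) (Fin n) ℝ) (B : Matrix (Fin l) (Fin n) ℝ)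
    (b : Fin m → ℝ) (α σ : ℝ) (hα : 0 < α) (hσ : 0 < σ) (ζs : Fin l → ℝ)
    (xbar : Fin n → ℝ) (zbar : Fin l → ℝ)
    (hmin : ∀ (x : Fin n → ℝ) (z : Fin l → ℝ),
      psiAL17 m n l A B b α σ ζs xbar zbar ≤ psiAL17 m n l A B b α σ ζs x z)
    (huniq : ∀ (x : Fin n → ℝ) (z : Fin l → ℝ),
      (∀ (x' : Fin n → ℝ) (z' : Fin l → ℝ),
        psiAL17 m n l A B b α σ ζs x z ≤ psiAL17 m n l A B b α σ ζs x' z') →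
      x = xbar ∧ z = zbar)
    (hstrict : ∀ i, zbar i = 0 → |ζs i + σ * (B.mulVec xbar i - zbar i)| < α) :
    (Aᵀ * A + σ • (Bᵀ * Matrix.diagonal (fun i => if zbar i = 0 then (1:ℝ) else 0) * B)).PosDef := by
  classical
  set d : Fin l → ℝ := fun i => if zbar i = 0 then (1:ℝ) else 0 with hd
  rw [Matrix.posDef_iff_dotProduct_mulVec]
  constructor
  · rw [Matrix.IsHermitian, Matrix.conjTranspose_eq_transpose_of_trivial,
      Matrix.transpose_add, Matrix.transpose_smul, Matrix.transpose_mul,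
      Matrix.transpose_mul, Matrix.transpose_mul, Matrix.transpose_transpose,
      Matrix.transpose_transpose, Matrix.diagonal_transpose, Matrix.mul_assoc]
  · intro v hv
    have h1 : v ⬝ᵥ ((Aᵀ * A) *ᵥ v) = (A *ᵥ v) ⬝ᵥ (A *ᵥ v) := by
      rw [← Matrix.mulVec_mulVec, Matrix.dotProduct_mulVec, Matrix.vecMul_transpose]
    have h2 : v ⬝ᵥ ((Bᵀ * Matrix.diagonal d * B) *ᵥ v)
        = (B *ᵥ v) ⬝ᵥ (Matrix.diagonal d *ᵥ (B *ᵥ v)) := by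
      rw [Matrix.mul_assoc, ← Matrix.mulVec_mulVec, Matrix.dotProduct_mulVec,
        Matrix.vecMul_transpose, ← Matrix.mulVec_mulVec]
    have hform : (star v) ⬝ᵥ ((Aᵀ * A + σ • (Bᵀ * Matrix.diagonal d * B)) *ᵥ v)
        = (∑ i, (A *ᵥ v) i ^ 2) + σ * ∑ i, d i * (B *ᵥ v) i ^ 2 := by
      rw [star_trivial, Matrix.add_mulVec, dotProduct_add, Matrix.smul_mulVec,
        dotProduct_smul, h1, h2]
      congr 1
      · simp [dotProduct, sq]
      · rw [smul_eq_mul]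
        congr 1
        simp only [dotProduct, Matrix.mulVec_diagonal]
        exact Finset.sum_congr rfl (fun i _ => by ring)
    rw [hform]
    have hnn1 : (0:ℝ) ≤ ∑ i, (A *ᵥ v) i ^ 2 := Finset.sum_nonneg (fun i _ => sq_nonneg _)
    have hnn2 : (0:ℝ) ≤ ∑ i, d i * (B *ᵥ v) i ^ 2 := by
      apply Finset.sum_nonneg
      intro i _
      rw [hd]
      dsimp only
      split <;> [simp [sq_nonneg]; simp]
    by_contra hc
    push_neg at hc
    have hQ : (∑ i, (A *ᵥ v) i ^ 2) + σ * ∑ i, d i * (B *ᵥ v) i ^ 2 = 0 := by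
      nlinarith
    have hs1 : (∑ i, (A *ᵥ v) i ^ 2) = 0 := by nlinarith
    have hs2 : (∑ i, d i * (B *ᵥ v) i ^ 2) = 0 := by nlinarith
    have hAv : A *ᵥ v = 0 := by
      funext i
      have := (Finset.sum_eq_zero_iff_of_nonneg (fun i _ => sq_nonneg ((A *ᵥ v) i))).1 hs1 i (Finset.mem_univ i)
      exact pow_eq_zero_iff (by norm_num) |>.1 this
    have hBv : ∀ i, zbar i = 0 → (B *ᵥ v) i = 0 := by
      intro i hz
      have hterm := (Finset.sum_eq_zero_iff_of_nonneg (fun i _ => by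
        rw [hd]; dsimp only; split <;> [simp [sq_nonneg]; simp])).1 hs2 i (Finset.mem_univ i)
      rw [hd] at hterm
      dsimp only at hterm
      rw [if_pos hz, one_mul] at hterm
      exact pow_eq_zero_iff two_ne_zero |>.1 hterm
    exact hv (null17 m n l A B b α σ hα ζs xbar zbar hmin huniq v hAv hBv)
end
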